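/- Let E be a complex Banach lattice, let (S_n) be a sequence of positive bounded linear operators on E, and let I := { x ∈ E : there exists a sequence (x_n) in E with x_n → x and S_n |x_n| → 0 }. If T is a positive bounded linear operator on E which commutes with all operators S_n, then I is invariant under T, i.e. T I ⊆ I. -/

import Mathlib

open Filter Topology Asymptotics

noncomputable section

/-- A complex Banach lattice, axiomatized via its order (given by the positive cone),
its modulus map `cabs` and its canonical conjugation `conj`. -/
class ComplexBanachLattice (E : Type*) extends
    NormedAddCommGroup E, NormedSpace ℂ E, CompleteSpace E, PartialOrder E where
  /-- the modulus map `z ↦ |z|` -/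
  cabs : E → E
  /-- the canonical conjugation of the complex Banach lattice -/
  conj : E → E
  add_le_add_left' : ∀ a b : E, a ≤ b → ∀ c : E, c + a ≤ c + b
  smul_nonneg' : ∀ (r : ℝ) (x : E), 0 ≤ r → 0 ≤ x → 0 ≤ (r : ℂ) • x
  isClosed_nonneg : IsClosed {x : E | 0 ≤ x}
  cabs_nonneg : ∀ x : E, 0 ≤ cabs x
  cabs_of_nonneg : ∀ x : E, 0 ≤ x → cabs x = x
  cabs_eq_zero_iff : ∀ x : E, cabs x = 0 ↔ x = 0
  cabs_smul : ∀ (c : ℂ) (x : E), cabs (c • x) = (‖c‖ : ℂ) • cabs x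
  cabs_add_le : ∀ x y : E, cabs (x + y) ≤ cabs x + cabs y
  norm_cabs : ∀ x : E, ‖cabs x‖ = ‖x‖
  norm_mono : ∀ x y : E, cabs x ≤ cabs y → ‖x‖ ≤ ‖y‖
  conj_add : ∀ x y : E, conj (x + y) = conj x + conj y
  conj_smul : ∀ (c : ℂ) (x : E), conj (c • x) = (starRingEnd ℂ c) • conj x
  conj_conj : ∀ x : E, conj (conj x) = x
  conj_of_nonneg : ∀ x : E, 0 ≤ x → conj x = x
  cabs_conj : ∀ x : E, cabs (conj x) = cabs x
  cabs_isLUB : ∀ x : E, conj x = x → IsLUB {x, -x} (cabs x)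
  exists_lub : ∀ x y : E, conj x = x → conj y = y → ∃ z : E, IsLUB {x, y} z

open ComplexBanachLattice

/-- A bounded linear operator on a complex Banach lattice is positive
if it maps positive elements to positive elements. -/
def IsPosOp {E : Type*} [ComplexBanachLattice E] (T : E →L[ℂ] E) : Prop :=
  ∀ x : E, 0 ≤ x → 0 ≤ T x

/-- The set `I` from Lemma 4.4: all `x` admitting a sequence `xₙ → x`
with `Sₙ|xₙ| → 0`. -/
def idealSet {E : Type*} [ComplexBanachLattice E] (S : ℕ → E →L[ℂ] E) : Set E :=
  {x : E | ∃ u : ℕ → E, Tendsto u atTop (𝓝 x) ∧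
    Tendsto (fun n => (S n) (cabs (u n))) atTop (𝓝 0)}

/-! Splitting `y = Re y + i Im y` with `|Re y|, |Im y| ≤ |y|`, and using `|Tz| ≤ T|z|` for real `z`,
a positive `T` satisfies `|Ty| ≤ 2 T|y|`. So if `xₙ → x` with `Sₙ|xₙ| → 0`, then `T xₙ → T x` and
`0 ≤ Sₙ|T xₙ| ≤ 2 T Sₙ|xₙ| → 0`, using that `T` commutes with `Sₙ`. -/

namespace ComplexBanachLattice

variable {E : Type*} [ComplexBanachLattice E]

instance : IsOrderedAddMonoid E where
  add_le_add_left a b h c := by simpa only [add_comm] using add_le_add_left' a b h c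

instance : PosSMulMono ℝ E :=
  .of_smul_nonneg fun r hr x hx => by simpa only [Complex.coe_smul] using smul_nonneg' r x hr hx

lemma cabs_real_smul (r : ℝ) (x : E) : cabs (r • x) = |r| • cabs x := by
  rw [← Complex.coe_smul, cabs_smul, Complex.norm_real, Real.norm_eq_abs, Complex.coe_smul]

lemma cabs_neg (x : E) : cabs (-x) = cabs x := by
  simpa using cabs_smul (-1 : ℂ) x

lemma cabs_I_smul (x : E) : cabs (Complex.I • x) = cabs x := by
  simp [cabs_smul]

lemma conj_sub (x y : E) : conj (x - y) = conj x - conj y :=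
  (AddMonoidHom.mk' conj conj_add).map_sub x y

lemma conj_real_smul (r : ℝ) (x : E) : conj (r • x) = r • conj x := by
  rw [← Complex.coe_smul, conj_smul, Complex.conj_ofReal, Complex.coe_smul]

lemma conj_I_smul (x : E) : conj (Complex.I • x) = -(Complex.I • conj x) := by
  rw [conj_smul, Complex.conj_I, neg_smul]

lemma le_cabs_of_conj_eq {z : E} (hz : conj z = z) : z ≤ cabs z :=
  (cabs_isLUB z hz).1 (Set.mem_insert _ _)

lemma neg_le_cabs_of_conj_eq {z : E} (hz : conj z = z) : -z ≤ cabs z :=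
  (cabs_isLUB z hz).1 (Set.mem_insert_of_mem _ rfl)

lemma norm_le_norm_of_nonneg_of_le {a b : E} (ha : 0 ≤ a) (hab : a ≤ b) : ‖a‖ ≤ ‖b‖ := by
  apply norm_mono
  rw [cabs_of_nonneg a ha, cabs_of_nonneg b (ha.trans hab)]
  exact hab

def re (y : E) : E := (2⁻¹ : ℝ) • (y + conj y)

def im (y : E) : E := (2⁻¹ : ℝ) • (Complex.I • (conj y - y))

lemma conj_re (y : E) : conj (re y) = re y := by
  rw [re, conj_real_smul, conj_add, conj_conj, add_comm]

lemma conj_im (y : E) : conj (im y) = im y := by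
  rw [im, conj_real_smul, conj_I_smul, conj_sub, conj_conj, ← smul_neg, neg_sub]

lemma re_add_I_smul_im (y : E) : re y + Complex.I • im y = y := by
  rw [re, im, smul_comm, smul_smul, Complex.I_mul_I, neg_one_smul, neg_sub, ← smul_add]
  rw [add_add_sub_cancel, ← two_smul ℝ, smul_smul]
  norm_num

lemma half_smul_cabs_add_le {x w y : E} (hx : cabs x = cabs y) (hw : cabs w = cabs y) :
    cabs ((2⁻¹ : ℝ) • (x + w)) ≤ cabs y := by
  rw [cabs_real_smul, abs_of_pos (by norm_num)]
  calc (2⁻¹ : ℝ) • cabs (x + w) ≤ (2⁻¹ : ℝ) • (cabs x + cabs w) :=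
        smul_le_smul_of_nonneg_left (cabs_add_le x w) (by norm_num)
    _ = cabs y := by rw [hx, hw, ← two_smul ℝ, smul_smul]; norm_num

lemma cabs_re_le (y : E) : cabs (re y) ≤ cabs y :=
  half_smul_cabs_add_le rfl (cabs_conj y)

lemma cabs_im_le (y : E) : cabs (im y) ≤ cabs y := by
  rw [im, ← smul_comm, cabs_I_smul, sub_eq_add_neg]
  exact half_smul_cabs_add_le (cabs_conj y) (cabs_neg y)

end ComplexBanachLattice

namespace IsPosOp

variable {E : Type*} [ComplexBanachLattice E] {T : E →L[ℂ] E}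

lemma monotone (hT : IsPosOp T) : Monotone T := fun a b hab => by
  simpa only [sub_nonneg, map_sub] using hT (b - a) (sub_nonneg.2 hab)

lemma conj_apply_of_conj_eq (hT : IsPosOp T) {z : E} (hz : conj z = z) :
    conj (T z) = T z := by
  -- `z = |z| - (|z| - z)` is a difference of positive elements
  have hdiff : 0 ≤ cabs z - z := sub_nonneg.2 (le_cabs_of_conj_eq hz)
  rw [← sub_sub_cancel (cabs z) z, map_sub, conj_sub, conj_of_nonneg _ (hT _ (cabs_nonneg z)),
    conj_of_nonneg _ (hT _ hdiff)]

lemma cabs_apply_le_of_conj_eq (hT : IsPosOp T) {z : E} (hz : conj z = z) :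
    cabs (T z) ≤ T (cabs z) := by
  refine (cabs_isLUB (T z) (hT.conj_apply_of_conj_eq hz)).2 ?_
  rintro w (rfl | rfl)
  · exact hT.monotone (le_cabs_of_conj_eq hz)
  · rw [← map_neg]
    exact hT.monotone (neg_le_cabs_of_conj_eq hz)

lemma cabs_apply_le (hT : IsPosOp T) (y : E) : cabs (T y) ≤ (2 : ℝ) • T (cabs y) :=
  calc cabs (T y) = cabs (T (re y) + Complex.I • T (im y)) := by
        rw [← map_smul, ← map_add, re_add_I_smul_im]
    _ ≤ cabs (T (re y)) + cabs (T (im y)) := by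
        simpa only [cabs_I_smul] using cabs_add_le (T (re y)) (Complex.I • T (im y))
    _ ≤ T (cabs (re y)) + T (cabs (im y)) :=
        add_le_add (hT.cabs_apply_le_of_conj_eq (conj_re y))
          (hT.cabs_apply_le_of_conj_eq (conj_im y))
    _ ≤ T (cabs y) + T (cabs y) :=
        add_le_add (hT.monotone (cabs_re_le y)) (hT.monotone (cabs_im_le y))
    _ = (2 : ℝ) • T (cabs y) := (two_smul ℝ _).symm

end IsPosOp

/-- Lemma 4.4(b): if `T` is a positive operator commuting with all the positive
operators `Sₙ`, then the ideal `I = {x | ∃ xₙ → x with Sₙ|xₙ| → 0}` is `T`-invariant. -/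
theorem idealSet_invariant
    {E : Type*} [ComplexBanachLattice E] (S : ℕ → E →L[ℂ] E)
    (hSpos : ∀ n, IsPosOp (S n))
    (T : E →L[ℂ] E) (hTpos : IsPosOp T)
    (hcomm : ∀ n, ∀ x : E, (S n) (T x) = T ((S n) x)) :
    ∀ x ∈ idealSet S, T x ∈ idealSet S := by
  rintro x ⟨u, hu, hSu⟩
  refine ⟨fun n => T (u n), (T.continuous.tendsto x).comp hu, ?_⟩
  have hbound : ∀ n, ‖S n (cabs (T (u n)))‖ ≤ ‖(2 : ℝ) • T (S n (cabs (u n)))‖ := fun n =>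
    norm_le_norm_of_nonneg_of_le (hSpos n _ (cabs_nonneg _)) <|
      calc S n (cabs (T (u n))) ≤ S n ((2 : ℝ) • T (cabs (u n))) :=
            (hSpos n).monotone (hTpos.cabs_apply_le (u n))
        _ = (2 : ℝ) • T (S n (cabs (u n))) := by rw [(S n).map_smul_of_tower, hcomm]
  have hlim : Tendsto (fun n => (2 : ℝ) • T (S n (cabs (u n)))) atTop (𝓝 0) := by
    simpa using ((T.continuous.tendsto 0).comp hSu).const_smul (2 : ℝ)
  exact squeeze_zero_norm hbound (by simpa using hlim.norm)
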